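/- Let A ∈ ℝ^{N×N} be Hurwitz and B ∈ ℝ^{N×M}. Then the controllability Gramian W_C = ∫₀^∞ exp(tA) B Bᵀ exp(tAᵀ) dt is well defined and solves the Lyapunov matrix equation A·W_C + W_C·Aᵀ = −B·Bᵀ. -/

import Mathlib

/-!
Every complex vector is a sum of generalized eigenvectors of `A`, and on a generalized
eigenvector for `μ` the flow `exp (t A)` is `e^{t μ}` times a polynomial in `t`. As every such
`μ` has `Re μ < 0`, `exp (t A) = O(e^{-ε t})` for some `ε > 0`, so
`F t = exp (t A) B Bᵀ exp (t Aᵀ)` is integrable on `(0, ∞)` and tends to `0`. Since `F' = A F + F Aᵀ`, the fundamental theorem of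
calculus gives `A W_C + W_C Aᵀ = ∫₀^∞ F' = -F 0 = -B Bᵀ`.
-/

open MeasureTheory Matrix NormedSpace

attribute [local instance] Matrix.normedAddCommGroup Matrix.normedSpace

def IsHurwitz {N : ℕ} (A : Matrix (Fin N) (Fin N) ℝ) : Prop :=
  ∀ μ ∈ spectrum ℂ (A.map Complex.ofReal), μ.re < 0

open Asymptotics Filter Topology Set
open scoped Nat

theorem hasDerivAt_exp_smul_mul_mul_exp_smul {𝔸 : Type*} [NormedRing 𝔸] [NormedAlgebra ℝ 𝔸]
    [CompleteSpace 𝔸] (a q b : 𝔸) (t : ℝ) :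
    HasDerivAt (fun s : ℝ => exp (s • a) * q * exp (s • b))
      (a * (exp (t • a) * q * exp (t • b)) + exp (t • a) * q * exp (t • b) * b) t :=
  (((hasDerivAt_exp_smul_const' a t).mul_const q).mul (hasDerivAt_exp_smul_const b t)).congr_deriv
    (by simp only [mul_assoc])

theorem ContinuousLinearMap.map_integral_Ioi_eq_neg_of_hasDerivAt {E : Type*}
    [NormedAddCommGroup E] [NormedSpace ℝ E] [CompleteSpace E] (L : E →L[ℝ] E) {F : ℝ → E}
    {a : ℝ} (hderiv : ∀ t ∈ Ici a, HasDerivAt F (L (F t)) t) (hint : IntegrableOn F (Ioi a))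
    (hlim : Tendsto F atTop (𝓝 0)) :
    L (∫ t in Ioi a, F t) = -F a := by
  rw [← L.integral_comp_comm hint,
    integral_Ioi_of_hasDerivAt_of_tendsto' hderiv (L.integrable_comp hint) hlim, zero_sub]

theorem MeasureTheory.IntegrableOn.of_isBigO_exp_neg {E : Type*} [NormedAddCommGroup E]
    {f : ℝ → E} {a b : ℝ} (hb : 0 < b) (hf : ContinuousOn f (Ici a))
    (ho : f =O[atTop] fun x => Real.exp (-b * x)) : IntegrableOn f (Ioi a) :=
  (integrable_norm_iff ((hf.mono Ioi_subset_Ici_self).aestronglyMeasurable measurableSet_Ioi)).1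
    (integrable_of_isBigO_exp_neg hb hf.norm ho.norm_left)

theorem Asymptotics.IsBigO.matrix_mul {α l m n 𝕜 : Type*} [Fintype l] [Fintype m] [Fintype n]
    [NormedRing 𝕜] {L : Filter α} {f : α → Matrix l m 𝕜} {g : α → Matrix m n 𝕜} {u v : α → ℝ}
    (hf : f =O[L] u) (hg : g =O[L] v) : (fun x => f x * g x) =O[L] fun x => u x * v x :=
  isBigO_pi.2 fun i => isBigO_pi.2 fun k => by
    simp only [mul_apply]
    exact IsBigO.fun_sum fun j _ =>
      (isBigO_pi.1 (isBigO_pi.1 hf i) j).mul (isBigO_pi.1 (isBigO_pi.1 hg j) k)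

namespace Matrix

variable {n : Type*} [Fintype n] [DecidableEq n]

/- `HasSum`, `HasDerivAt` and `exp` depend only on the topology, so Banach-algebra facts about
`exp` transfer from the submultiplicative norm `linftyOpNormedRing` to the entrywise sup norm
that matrices carry in this file. -/
theorem hasSum_exp_series {𝕂 : Type*} [RCLike 𝕂] (A : Matrix n n 𝕂) :
    HasSum (fun i => (i ! : 𝕂)⁻¹ • A ^ i) (exp A) :=
  @exp_series_hasSum_exp' 𝕂 _ _ _ _ Matrix.linftyOpNormedRing Matrix.linftyOpNormedAlgebra
    (FiniteDimensional.complete 𝕂 _) A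

theorem hasDerivAt_exp_smul_mul_mul_exp_smul (A Q B : Matrix n n ℝ) (t : ℝ) :
    HasDerivAt (fun s : ℝ => exp (s • A) * Q * exp (s • B))
      (A * (exp (t • A) * Q * exp (t • B)) + exp (t • A) * Q * exp (t • B) * B) t :=
  @_root_.hasDerivAt_exp_smul_mul_mul_exp_smul _ Matrix.linftyOpNormedRing
    Matrix.linftyOpNormedAlgebra (FiniteDimensional.complete ℝ _) A Q B t

theorem map_ofReal_exp (A : Matrix n n ℝ) :
    (exp A).map Complex.ofReal = exp (A.map Complex.ofReal) := by
  refine ((hasSum_exp_series A).map (Algebra.ofId ℝ ℂ).mapMatrix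
    (continuous_id.matrix_map Complex.continuous_ofReal)).unique ?_
  convert hasSum_exp_series (A.map Complex.ofReal) using 2 with i
  rw [Function.comp_apply, map_smul, map_pow, ← Complex.coe_smul]
  push_cast
  rfl

theorem exp_smul_mulVec_eq_sum {A : Matrix n n ℂ} {μ : ℂ} {v : n → ℂ} {k : ℕ}
    (hv : (A - μ • 1) ^ k *ᵥ v = 0) (z : ℂ) :
    exp (z • A) *ᵥ v =
      Complex.exp (z * μ) • ∑ i ∈ Finset.range k, (z ^ i / i !) • ((A - μ • 1) ^ i *ᵥ v) := by
  set T := A - μ • 1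
  have hsplit : z • A = (z * μ) • (1 : Matrix n n ℂ) + z • T := by
    rw [mul_smul, ← smul_add, add_sub_cancel]
  have hscalar : exp ((z * μ) • (1 : Matrix n n ℂ)) = Complex.exp (z * μ) • 1 := by
    rw [smul_one_eq_diagonal, exp_diagonal, Pi.exp_def, ← smul_one_eq_diagonal,
      Complex.exp_eq_exp_ℂ]
  have hnil : ∀ i, k ≤ i → T ^ i *ᵥ v = 0 := fun i hi => by
    rw [← Nat.sub_add_cancel hi, pow_add, ← mulVec_mulVec, hv, mulVec_zero]
  have hfinite : HasSum (fun i => ((i ! : ℂ)⁻¹ • (z • T) ^ i) *ᵥ v)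
      (∑ i ∈ Finset.range k, (z ^ i / i !) • (T ^ i *ᵥ v)) := by
    have hterm : ∀ i, ((i ! : ℂ)⁻¹ • (z • T) ^ i) *ᵥ v = (z ^ i / i !) • (T ^ i *ᵥ v) :=
      fun i => by rw [smul_pow, smul_smul, smul_mulVec, div_eq_inv_mul]
    simp_rw [hterm]
    exact hasSum_sum_of_ne_finset_zero fun i hi => by
      rw [hnil i (not_lt.1 (Finset.mem_range.not.1 hi)), smul_zero]
  rw [hsplit, exp_add_of_commute _ _ ((Commute.one_left _).smul_left _), hscalar, smul_one_mul,
    smul_mulVec]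
  exact congrArg _ <| ((hasSum_exp_series (z • T)).map (mulVec.addMonoidHomLeft v)
    (continuous_id.matrix_mulVec continuous_const)).unique hfinite

theorem isBigO_exp_smul_mulVec_of_mem_maxGenEigenspace {A : Matrix n n ℂ} {μ : ℂ} {ε : ℝ}
    (hμ : μ.re < -ε) {v : n → ℂ} (hv : v ∈ Module.End.maxGenEigenspace (toLin' A) μ) :
    (fun t : ℝ => exp ((t : ℂ) • A) *ᵥ v) =O[atTop] fun t => Real.exp (-ε * t) := by
  obtain ⟨k, hk⟩ := (Module.End.mem_maxGenEigenspace _ _ _).1 hv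
  have hk' : (A - μ • 1) ^ k *ᵥ v = 0 := by
    change ((toLinAlgEquiv' A - μ • 1) ^ k) v = 0 at hk
    rwa [← map_one toLinAlgEquiv', ← map_smul, ← map_sub, ← map_pow, toLinAlgEquiv'_apply] at hk
  simp_rw [exp_smul_mulVec_eq_sum hk', Finset.smul_sum, smul_smul]
  refine IsBigO.fun_sum fun i _ => ?_
  refine (isBigO_of_le' (c := ‖(A - μ • 1) ^ i *ᵥ v‖) _ fun t => ?_).trans
    (isLittleO_exp_mul_rpow_of_lt (i : ℝ) hμ).isBigO
  simp only [norm_smul, norm_mul, norm_div, Complex.norm_exp, Complex.re_ofReal_mul, norm_pow,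
    Complex.norm_real, Complex.norm_natCast, Real.rpow_natCast, Real.norm_eq_abs, Real.abs_exp]
  rw [mul_comm t, mul_comm]
  gcongr
  exact div_le_self (by positivity) (mod_cast i.factorial_pos)

theorem isBigO_exp_smul_mulVec {A : Matrix n n ℂ} {ε : ℝ} (hA : ∀ μ ∈ spectrum ℂ A, μ.re < -ε)
    (v : n → ℂ) : (fun t : ℝ => exp ((t : ℂ) • A) *ᵥ v) =O[atTop] fun t => Real.exp (-ε * t) := by
  have hv : v ∈ ⨆ μ, Module.End.maxGenEigenspace (toLin' A) μ := by
    rw [Module.End.iSup_maxGenEigenspace_eq_top]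
    exact Submodule.mem_top
  have hzero : (fun t : ℝ => exp ((t : ℂ) • A) *ᵥ 0) =O[atTop] fun t => Real.exp (-ε * t) := by
    simp only [mulVec_zero]
    exact isBigO_zero _ _
  refine Submodule.iSup_induction _
    (motive := fun v => (fun t : ℝ => exp ((t : ℂ) • A) *ᵥ v) =O[atTop] fun t => Real.exp (-ε * t))
    hv (fun μ w hw => ?_) hzero fun x y hx hy => by simpa only [mulVec_add] using hx.add hy
  rcases eq_or_ne w 0 with rfl | hw0
  · exact hzero
  refine isBigO_exp_smul_mulVec_of_mem_maxGenEigenspace (hA μ ?_) hw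
  rw [← spectrum_toLin']
  exact ((Module.End.hasUnifEigenvalue_iff_hasUnifEigenvalue_one (by simp)).1
    ((Submodule.ne_bot_iff _).2 ⟨w, hw, hw0⟩)).mem_spectrum

end Matrix

theorem IsHurwitz.exists_isBigO_exp_smul {N : ℕ} {A : Matrix (Fin N) (Fin N) ℝ}
    (hA : IsHurwitz A) :
    ∃ ε > 0, (fun t : ℝ => exp (t • A)) =O[atTop] fun t => Real.exp (-ε * t) := by
  have hgap : ∀ᶠ ε in 𝓝[>] (0 : ℝ), ∀ μ ∈ spectrum ℂ (A.map Complex.ofReal), μ.re < -ε :=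
    (finite_spectrum _).eventually_all.2 fun μ hμ =>
      ((eventually_lt_nhds (neg_pos.2 (hA μ hμ))).filter_mono nhdsWithin_le_nhds).mono
        fun _ => lt_neg.2
  obtain ⟨ε, hεA, hε⟩ := (hgap.and self_mem_nhdsWithin).exists
  refine ⟨ε, hε, isBigO_pi.2 fun i => isBigO_pi.2 fun j => ?_⟩
  refine isBigO_norm_left.1 ((isBigO_norm_left.2
    (isBigO_pi.1 (isBigO_exp_smul_mulVec hεA (Pi.single j 1)) i)).congr_left fun t => ?_)
  have hsmul : (t : ℂ) • A.map Complex.ofReal = (t • A).map Complex.ofReal := by ext; simp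
  rw [mulVec_single_one, hsmul, ← map_ofReal_exp, col_apply, map_apply, Complex.norm_real]

/-- The controllability Gramian `W_C = ∫₀^∞ exp(tA) B Bᵀ exp(tAᵀ) dt` is well
defined and solves the Lyapunov equation `A W_C + W_C Aᵀ = -B Bᵀ`. -/
theorem controllabilityGramian_solves_lyapunov {N M : ℕ}
    (A : Matrix (Fin N) (Fin N) ℝ) (B : Matrix (Fin N) (Fin M) ℝ)
    (hA : IsHurwitz A) :
    @IntegrableOn _ _ _ _ SeminormedAddGroup.toContinuousENorm (fun t : ℝ => exp (t • A) * B * Bᵀ * exp (t • Aᵀ))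
        (Set.Ioi (0 : ℝ)) volume ∧
      A * (∫ t in Set.Ioi (0 : ℝ), exp (t • A) * B * Bᵀ * exp (t • Aᵀ)) +
          (∫ t in Set.Ioi (0 : ℝ), exp (t • A) * B * Bᵀ * exp (t • Aᵀ)) * Aᵀ =
        -(B * Bᵀ) := by
  obtain ⟨ε, hε, hexp⟩ := hA.exists_isBigO_exp_smul
  set F := fun t : ℝ => exp (t • A) * B * Bᵀ * exp (t • Aᵀ)
  let L := (LinearMap.mulLeft ℝ A + LinearMap.mulRight ℝ Aᵀ).toContinuousLinearMap
  have hderiv : ∀ t, HasDerivAt F (A * F t + F t * Aᵀ) t := fun t => by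
    simpa only [F, Matrix.mul_assoc] using
      Matrix.hasDerivAt_exp_smul_mul_mul_exp_smul A (B * Bᵀ) Aᵀ t
  have hexpT : (fun t : ℝ => exp (t • Aᵀ)) =O[atTop] fun t => Real.exp (-ε * t) :=
    isBigO_norm_left.1 ((isBigO_norm_left.2 hexp).congr_left fun t => by
      rw [← transpose_smul, exp_transpose, norm_transpose])
  have hdecay : F =O[atTop] fun t => Real.exp (-(2 * ε) * t) :=
    (((hexp.matrix_mul (isBigO_const_one ℝ B _)).matrix_mul (isBigO_const_one ℝ Bᵀ _)).matrix_mul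
      hexpT).congr_right fun t => by rw [mul_one, mul_one, ← Real.exp_add]; ring_nf
  have hcont : Continuous F := continuous_iff_continuousAt.2 fun t => (hderiv t).continuousAt
  have hint := IntegrableOn.of_isBigO_exp_neg (a := 0) (by positivity) hcont.continuousOn hdecay
  have hF0 : F 0 = B * Bᵀ := by simp [F]
  refine ⟨hint, hF0 ▸ ?_⟩
  exact L.map_integral_Ioi_eq_neg_of_hasDerivAt (fun t _ => hderiv t) hint
    (hdecay.trans_tendsto (Real.tendsto_exp_atBot.comp
      (tendsto_id.const_mul_atTop_of_neg (by linarith))))
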